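/- arXiv:1609.04482 — 5 statements merged into one kernel-verified Lean document; each statement's English description precedes it below -/
import Mathlib

section
/- For any graph G, the number of Laplacian eigenvalues of G in [0,1) is at most the domination number: m_G[0,1) ≤ γ(G). -/
open scoped Classical

/-- The `i`-th Laplacian eigenvalue of `G` (in the unsorted indexing given by
the spectral theorem applied to the Laplacian matrix). -/
noncomputable def lapEig {V : Type*} [Fintype V] [DecidableEq V] (G : SimpleGraph V) : V → ℝ :=
  (G.posSemidef_lapMatrix (R := ℝ)).isHermitian.eigenvalues

/-- The number of Laplacian eigenvalues of `G` (with multiplicity) satisfying `P`. -/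
noncomputable def mCount {V : Type*} [Fintype V] [DecidableEq V] (G : SimpleGraph V)
    (P : ℝ → Prop) : ℕ :=
  (Finset.univ.filter fun i => P (lapEig G i)).card

/-- `S` is a dominating set of `G`. -/
def IsDomSet {V : Type*} (G : SimpleGraph V) (S : Finset V) : Prop :=
  ∀ v ∉ S, ∃ u ∈ S, G.Adj u v

/-- The domination number of `G`. -/
noncomputable def domNum {V : Type*} [Fintype V] (G : SimpleGraph V) : ℕ :=
  sInf {k | ∃ S : Finset V, IsDomSet G S ∧ S.card = k}

/-!
Let `S` be a dominating set and let `x` vanish on `S`. Each `v ∉ S` has a neighbour `u ∈ S`, and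
the edge `uv` contributes `(x v)²` to `xᵀ L x = ∑_{uv ∈ E} (x u - x v)²`, so `‖x‖² ≤ xᵀ L x`.
Such `x` form a subspace of dimension `n - |S|`, while `xᵀ L x < ‖x‖²` for every nonzero `x` in
the span of the eigenvectors with eigenvalue `< 1`. The two subspaces meet only in `0`, so at most
`|S|` eigenvalues lie in `[0, 1)`.
-/

open Finset Matrix

theorem Finset.two_mul_sum_compl_sum_le_sum_sum {ι R : Type*} [Fintype ι] [DecidableEq ι]
    [Semiring R] [PartialOrder R] [IsOrderedRing R] {F : ι → ι → R} (hF : ∀ i j, 0 ≤ F i j)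
    (hFsymm : ∀ i j, F i j = F j i) (S : Finset ι) :
    2 * ∑ i ∈ Sᶜ, ∑ j ∈ S, F i j ≤ ∑ i, ∑ j, F i j := by
  have hrow : ∀ (i : ι) (T : Finset ι), ∑ j ∈ T, F i j ≤ ∑ j, F i j := fun i T =>
    sum_le_sum_of_subset_of_nonneg (subset_univ T) fun j _ _ => hF i j
  calc 2 * ∑ i ∈ Sᶜ, ∑ j ∈ S, F i j
      = ∑ i ∈ S, ∑ j ∈ Sᶜ, F i j + ∑ i ∈ Sᶜ, ∑ j ∈ S, F i j := by
        rw [two_mul, sum_comm]; simp only [hFsymm]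
    _ ≤ ∑ i ∈ S, ∑ j, F i j + ∑ i ∈ Sᶜ, ∑ j, F i j :=
        add_le_add (sum_le_sum fun i _ => hrow i _) (sum_le_sum fun i _ => hrow i _)
    _ = ∑ i, ∑ j, F i j := sum_add_sum_compl S _

theorem finrank_ker_funLeft_coe {K V : Type*} [Field K] [Fintype V] (S : Finset V) :
    Module.finrank K (LinearMap.ker (LinearMap.funLeft K K ((↑) : S → V))) =
      Fintype.card V - #S := by
  have h := LinearMap.finrank_range_add_finrank_ker (LinearMap.funLeft K K ((↑) : S → V))
  rw [LinearMap.range_eq_top.2 (LinearMap.funLeft_surjective_of_injective K K _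
    Subtype.coe_injective), finrank_top, Module.finrank_fintype_fun_eq_card,
    Module.finrank_fintype_fun_eq_card, Fintype.card_coe] at h
  omega

namespace Matrix

variable {n : Type*} [Fintype n]

theorem dotProduct_mulVec_eq_star_mulVec_dotProduct {R : Type*} [CommSemiring R] [Star R]
    [TrivialStar R] (M : Matrix n n R) (x y : n → R) :
    x ⬝ᵥ (M *ᵥ y) = (star M *ᵥ x) ⬝ᵥ y := by
  rw [dotProduct_mulVec, star_eq_conjTranspose, conjTranspose_eq_transpose_of_trivial,
    mulVec_transpose]

namespace IsHermitian

variable [DecidableEq n] {A : Matrix n n ℝ} (hA : A.IsHermitian)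

theorem eigenvectorUnitary_mulVec_star_mulVec (x : n → ℝ) :
    (hA.eigenvectorUnitary : Matrix n n ℝ) *ᵥ (star (hA.eigenvectorUnitary : Matrix n n ℝ) *ᵥ x)
      = x := by
  rw [mulVec_mulVec, ← Unitary.coe_star, Unitary.coe_mul_star_self, one_mulVec]

theorem dotProduct_self_eq_sum_sq_star_eigenvectorUnitary_mulVec (x : n → ℝ) :
    x ⬝ᵥ x = ∑ i, (star (hA.eigenvectorUnitary : Matrix n n ℝ) *ᵥ x) i ^ 2 := by
  nth_rw 2 [← hA.eigenvectorUnitary_mulVec_star_mulVec x]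
  rw [dotProduct_mulVec_eq_star_mulVec_dotProduct]
  simp only [dotProduct, sq]

theorem dotProduct_mulVec_self_eq_sum_eigenvalues_mul_sq (x : n → ℝ) :
    x ⬝ᵥ (A *ᵥ x) =
      ∑ i, hA.eigenvalues i * (star (hA.eigenvectorUnitary : Matrix n n ℝ) *ᵥ x) i ^ 2 := by
  set U : Matrix n n ℝ := ↑hA.eigenvectorUnitary
  have hAx : A *ᵥ x = U *ᵥ (diagonal hA.eigenvalues *ᵥ (star U *ᵥ x)) := by
    conv_lhs => rw [hA.spectral_theorem]
    simp [Unitary.conjStarAlgAut_apply, mulVec_mulVec, U, Matrix.mul_assoc]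
  rw [hAx, dotProduct_mulVec_eq_star_mulVec_dotProduct]
  simp only [dotProduct, mulVec_diagonal]
  exact sum_congr rfl fun i _ => by ring

theorem card_eigenvalues_lt_add_finrank_le {c : ℝ} {W : Submodule ℝ (n → ℝ)}
    (hW : ∀ x ∈ W, c * (x ⬝ᵥ x) ≤ x ⬝ᵥ (A *ᵥ x)) :
    #{i | hA.eigenvalues i < c} + Module.finrank ℝ W ≤ Fintype.card n := by
  set U : Matrix n n ℝ := ↑hA.eigenvectorUnitary
  let coord : W →ₗ[ℝ] ({i // ¬hA.eigenvalues i < c} → ℝ) :=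
    LinearMap.funLeft ℝ ℝ Subtype.val ∘ₗ (star U).mulVecLin ∘ₗ W.subtype
  have hinj : Function.Injective coord := by
    refine (injective_iff_map_eq_zero coord).2 fun ⟨x, hx⟩ hcoord => ?_
    set y := star U *ᵥ x
    have hy : ∀ i, c ≤ hA.eigenvalues i → y i = 0 := fun i hi =>
      congr_fun hcoord ⟨i, not_lt.2 hi⟩
    have hterm : ∀ i, 0 ≤ (c - hA.eigenvalues i) * y i ^ 2 := fun i => by
      rcases lt_or_ge (hA.eigenvalues i) c with hlt | hge
      · exact mul_nonneg (sub_nonneg.2 hlt.le) (sq_nonneg _)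
      · simp [hy i hge]
    have hsum : ∑ i, (c - hA.eigenvalues i) * y i ^ 2 ≤ 0 := by
      have := hW x hx
      rw [hA.dotProduct_self_eq_sum_sq_star_eigenvectorUnitary_mulVec,
        hA.dotProduct_mulVec_self_eq_sum_eigenvalues_mul_sq, mul_sum] at this
      simpa [sub_mul] using this
    have hy0 : y = 0 := funext fun i => by
      have := (sum_eq_zero_iff_of_nonneg fun i _ => hterm i).1
        (le_antisymm hsum (sum_nonneg fun i _ => hterm i)) i (mem_univ i)
      rcases lt_or_ge (hA.eigenvalues i) c with hlt | hge
      · simpa [(sub_pos.2 hlt).ne'] using this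
      · exact hy i hge
    have hxy : x = U *ᵥ y := (hA.eigenvectorUnitary_mulVec_star_mulVec x).symm
    simp [hxy, hy0]
  have hrank := LinearMap.finrank_le_finrank_of_injective hinj
  rw [Module.finrank_fintype_fun_eq_card, Fintype.card_subtype_compl,
    Fintype.card_subtype] at hrank
  have : #{i | hA.eigenvalues i < c} ≤ Fintype.card n := card_le_univ _
  omega

end IsHermitian

end Matrix

namespace SimpleGraph

variable {V : Type*} [Fintype V] (G : SimpleGraph V)

theorem exists_isDomSet_card_eq_domNum : ∃ S : Finset V, IsDomSet G S ∧ #S = domNum G :=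
  Nat.sInf_mem (⟨_, univ, fun v hv => absurd (mem_univ v) hv, rfl⟩ :
    {k | ∃ S : Finset V, IsDomSet G S ∧ #S = k}.Nonempty)

variable [DecidableEq V]

theorem dotProduct_self_le_dotProduct_lapMatrix_mulVec {S : Finset V} (hS : IsDomSet G S)
    {x : V → ℝ} (hx : ∀ v ∈ S, x v = 0) : x ⬝ᵥ x ≤ x ⬝ᵥ (G.lapMatrix ℝ *ᵥ x) := by
  set F : V → V → ℝ := fun i j => if G.Adj i j then (x i - x j) ^ 2 else 0 with hF
  have hF0 : ∀ i j, 0 ≤ F i j := fun i j => by simp only [hF]; split_ifs <;> positivity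
  have hFsymm : ∀ i j, F i j = F j i := fun i j => by
    simp only [hF, G.adj_comm i j]; split_ifs <;> ring
  have hform : x ⬝ᵥ (G.lapMatrix ℝ *ᵥ x) = (∑ i, ∑ j, F i j) / 2 := by
    rw [← toLinearMap₂'_apply', lapMatrix_toLinearMap₂']
  have hcut : x ⬝ᵥ x ≤ ∑ v ∈ Sᶜ, ∑ u ∈ S, F v u :=
    calc x ⬝ᵥ x = ∑ v ∈ Sᶜ, x v ^ 2 := by
          rw [dotProduct, ← sum_add_sum_compl S, sum_eq_zero fun v hv => by simp [hx v hv]]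
          simp [sq]
      _ ≤ ∑ v ∈ Sᶜ, ∑ u ∈ S, F v u := sum_le_sum fun v hv => by
          obtain ⟨u, hu, huv⟩ := hS v (mem_compl.1 hv)
          calc x v ^ 2 = F v u := by simp [hF, huv.symm, hx u hu]
            _ ≤ ∑ u ∈ S, F v u := single_le_sum (fun u _ => hF0 v u) hu
  have := two_mul_sum_compl_sum_le_sum_sum hF0 hFsymm S
  linarith

theorem mCount_Ico_zero_one_le_card_of_isDomSet {S : Finset V} (hS : IsDomSet G S) :
    mCount G (fun x => 0 ≤ x ∧ x < 1) ≤ #S := by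
  have hA : (G.lapMatrix ℝ).IsHermitian := G.isHermitian_lapMatrix ℝ
  have hW := hA.card_eigenvalues_lt_add_finrank_le (c := 1)
    (W := LinearMap.ker (LinearMap.funLeft ℝ ℝ ((↑) : S → V))) fun x hx => by
      rw [one_mul]
      exact G.dotProduct_self_le_dotProduct_lapMatrix_mulVec hS fun v hv => congr_fun hx ⟨v, hv⟩
  rw [finrank_ker_funLeft_coe] at hW
  have hIco : mCount G (fun x => 0 ≤ x ∧ x < 1) ≤ #{i | hA.eigenvalues i < 1} :=
    card_le_card fun i hi => by
      simp only [mem_filter] at hi ⊢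
      exact ⟨hi.1, hi.2.2⟩
  have hSV : #S ≤ Fintype.card V := card_le_univ S
  omega

end SimpleGraph

/-- Theorem 1: for any graph $G$, $m_G[0,1) \le \gamma(G)$. -/
theorem mCount_Ico_zero_one_le_domNum {n : ℕ} (G : SimpleGraph (Fin n)) :
    mCount G (fun x => 0 ≤ x ∧ x < 1) ≤ domNum G := by
  obtain ⟨S, hS, hcard⟩ := G.exists_isDomSet_card_eq_domNum
  exact hcard ▸ G.mCount_Ico_zero_one_le_card_of_isDomSet hS
end

section
/- For any graph G on n vertices, the matching number satisfies β_1(G) ≤ m_G[2,n]. -/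
open scoped Classical

/-- The matching number of $G$: the maximum number of pairwise disjoint edges. -/
noncomputable def matchNum {V : Type*} [Fintype V] [DecidableEq V] (G : SimpleGraph V) : ℕ :=
  sSup {k | ∃ M : Finset (Sym2 V), ↑M ⊆ G.edgeSet ∧
    (∀ e ∈ M, ∀ f ∈ M, e ≠ f → ∀ v : V, ¬(v ∈ e ∧ v ∈ f)) ∧ M.card = k}

/-!
Every Laplacian eigenvalue is at most `n`, because
`xᵀ L x = ½ ∑_{i ∼ j} (x i - x j)² ≤ ½ ∑_{i, j} (x i - x j)² ≤ n ‖x‖²`.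
For a matching `M`, the vectors `e_a - e_b`, one for each edge `ab ∈ M`, span an `|M|`-dimensional
space on which `xᵀ L x ≥ 2 ‖x‖²`: such an `x` vanishes off the matched vertices and satisfies
`x b = -x a` on every edge `ab ∈ M`, and since these edges are disjoint, each of them contributes
its own `(x a - x b)² = 2 (x a² + x b²)`. By the Courant–Fischer principle, `L` then has at least
`|M|` eigenvalues `≥ 2`.
-/

open Matrix Finset

namespace Matrix.IsHermitian

variable {ι : Type*} [Fintype ι] [DecidableEq ι] {A : Matrix ι ι ℝ} (hA : A.IsHermitian)

theorem dotProduct_eq_sum_eigenvectorBasis (x y : ι → ℝ) :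
    x ⬝ᵥ y = ∑ i, (⇑(hA.eigenvectorBasis i) ⬝ᵥ x) * (⇑(hA.eigenvectorBasis i) ⬝ᵥ y) := by
  have := hA.eigenvectorBasis.sum_inner_mul_inner (WithLp.toLp 2 x) (WithLp.toLp 2 y)
  simp only [EuclideanSpace.inner_eq_star_dotProduct, star_trivial] at this
  simpa [dotProduct_comm] using this.symm

theorem eigenvectorBasis_dotProduct_mulVec (x : ι → ℝ) (i : ι) :
    ⇑(hA.eigenvectorBasis i) ⬝ᵥ A *ᵥ x = hA.eigenvalues i * (⇑(hA.eigenvectorBasis i) ⬝ᵥ x) := by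
  have hAt : Aᵀ = A := by simpa [conjTranspose_eq_transpose_of_trivial] using hA.eq
  rw [dotProduct_mulVec, ← mulVec_transpose, hAt, mulVec_eigenvectorBasis, smul_dotProduct,
    smul_eq_mul]

theorem dotProduct_mulVec_eq_sum_eigenvalues_mul_sq (x : ι → ℝ) :
    x ⬝ᵥ A *ᵥ x = ∑ i, hA.eigenvalues i * (⇑(hA.eigenvectorBasis i) ⬝ᵥ x) ^ 2 := by
  simp only [dotProduct_eq_sum_eigenvectorBasis hA x, eigenvectorBasis_dotProduct_mulVec]
  exact sum_congr rfl fun i _ => by ring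

theorem eigenvalues_le_of_forall_dotProduct_mulVec_le {c : ℝ}
    (h : ∀ x, x ⬝ᵥ A *ᵥ x ≤ c * (x ⬝ᵥ x)) (i : ι) : hA.eigenvalues i ≤ c := by
  have hunit := hA.eigenvectorBasis.inner_eq_one i
  rw [EuclideanSpace.inner_eq_star_dotProduct, star_trivial] at hunit
  simpa [hA.mulVec_eigenvectorBasis, hunit] using h (hA.eigenvectorBasis i)

/-- The easy half of the Courant–Fischer min-max principle. -/
theorem finrank_le_card_eigenvalues_ge (c : ℝ) (W : Submodule ℝ (ι → ℝ))
    (hW : ∀ x ∈ W, c * (x ⬝ᵥ x) ≤ x ⬝ᵥ A *ᵥ x) :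
    Module.finrank ℝ W ≤ #{i | c ≤ hA.eigenvalues i} := by
  let coord : (ι → ℝ) →ₗ[ℝ] ({i // c ≤ hA.eigenvalues i} → ℝ) :=
    mulVecLin (Matrix.of fun i => ⇑(hA.eigenvectorBasis i.1))
  -- A vector of `W` orthogonal to every eigenvector with eigenvalue `≥ c` has
  -- `xᵀ A x < c ‖x‖²` unless it vanishes.
  have hinj : Function.Injective (coord ∘ₗ W.subtype) := by
    rw [← LinearMap.ker_eq_bot, LinearMap.ker_eq_bot']
    rintro ⟨x, hxW⟩ hx
    have hhigh : ∀ i, c ≤ hA.eigenvalues i → ⇑(hA.eigenvectorBasis i) ⬝ᵥ x = 0 :=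
      fun i hi => congrFun hx ⟨i, hi⟩
    have hterm : ∀ i, 0 ≤ (c - hA.eigenvalues i) * (⇑(hA.eigenvectorBasis i) ⬝ᵥ x) ^ 2 := by
      intro i
      rcases le_or_gt c (hA.eigenvalues i) with hi | hi
      · simp [hhigh i hi]
      · exact mul_nonneg (sub_nonneg.2 hi.le) (sq_nonneg _)
    have hsum : ∑ i, (c - hA.eigenvalues i) * (⇑(hA.eigenvectorBasis i) ⬝ᵥ x) ^ 2 ≤ 0 := by
      have hRayleigh := hW x hxW
      rw [dotProduct_mulVec_eq_sum_eigenvalues_mul_sq hA,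
        dotProduct_eq_sum_eigenvectorBasis hA x x, mul_sum] at hRayleigh
      simpa only [sub_mul, sum_sub_distrib, sq, mul_assoc, sub_nonpos] using hRayleigh
    have hcoord : ∀ i, ⇑(hA.eigenvectorBasis i) ⬝ᵥ x = 0 := by
      intro i
      rcases le_or_gt c (hA.eigenvalues i) with hi | hi
      · exact hhigh i hi
      · have := (sum_eq_zero_iff_of_nonneg fun i _ => hterm i).1
          (le_antisymm hsum (sum_nonneg fun i _ => hterm i)) i (mem_univ i)
        simpa [(sub_pos.2 hi).ne'] using this
    have hx0 : x ⬝ᵥ x = 0 := by simp [dotProduct_eq_sum_eigenvectorBasis hA x x, hcoord]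
    simpa using dotProduct_self_eq_zero.1 hx0
  simpa [Module.finrank_fintype_fun_eq_card, Fintype.card_subtype] using
    LinearMap.finrank_le_finrank_of_injective hinj

end Matrix.IsHermitian

theorem sum_sum_sub_sq_le {V : Type*} [Fintype V] (x : V → ℝ) :
    ∑ i, ∑ j, (x i - x j) ^ 2 ≤ 2 * Fintype.card V * ∑ i, x i ^ 2 := by
  have h : ∑ i, ∑ j, (x i - x j) ^ 2 =
      2 * Fintype.card V * ∑ i, x i ^ 2 - 2 * (∑ i, x i) ^ 2 := by
    simp only [sub_sq, sum_add_distrib, sum_sub_distrib, sum_const, card_univ, nsmul_eq_mul,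
      mul_assoc, ← mul_sum, ← sum_mul, sq (∑ i, x i)]
    ring
  nlinarith [sq_nonneg (∑ i, x i)]

namespace Sym2

variable {V : Type*}

theorem mk_out (e : Sym2 V) : s(e.out.1, e.out.2) = e :=
  Quot.out_eq e

theorem out_fst_ne_out_snd {e : Sym2 V} (he : ¬e.IsDiag) : e.out.1 ≠ e.out.2 := by
  rwa [← mk_out e, mk_isDiag_iff] at he

variable [DecidableEq V]

theorem toFinset_eq_out (e : Sym2 V) : e.toFinset = {e.out.1, e.out.2} := by
  rw [← toFinset_mk_eq, mk_out]

noncomputable def orientedIndicator (e : Sym2 V) : V → ℝ :=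
  Pi.single e.out.1 1 - Pi.single e.out.2 1

theorem orientedIndicator_apply_of_notMem {e : Sym2 V} {v : V} (hv : v ∉ e) :
    e.orientedIndicator v = 0 := by
  have h1 : v ≠ e.out.1 := fun h => hv (h ▸ out_fst_mem e)
  have h2 : v ≠ e.out.2 := fun h => hv (h ▸ out_snd_mem e)
  simp [orientedIndicator, h1, h2]

theorem orientedIndicator_apply_out_fst {e : Sym2 V} (he : ¬e.IsDiag) :
    e.orientedIndicator e.out.1 = 1 := by
  simp [orientedIndicator, out_fst_ne_out_snd he]

theorem orientedIndicator_apply_out_snd {e : Sym2 V} (he : ¬e.IsDiag) :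
    e.orientedIndicator e.out.2 = -1 := by
  simp [orientedIndicator, (out_fst_ne_out_snd he).symm]

theorem orientedIndicator_dotProduct [Fintype V] (e : Sym2 V) (x : V → ℝ) :
    e.orientedIndicator ⬝ᵥ x = x e.out.1 - x e.out.2 := by
  simp [orientedIndicator, sub_dotProduct, single_dotProduct]

end Sym2

namespace SimpleGraph

variable {V : Type*}

theorem dotProduct_lapMatrix_mulVec_le_card_mul [Fintype V] [DecidableEq V] (G : SimpleGraph V)
    [DecidableRel G.Adj] (x : V → ℝ) :
    x ⬝ᵥ G.lapMatrix ℝ *ᵥ x ≤ Fintype.card V * (x ⬝ᵥ x) := by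
  rw [← toLinearMap₂'_apply', lapMatrix_toLinearMap₂']
  have hadj : (∑ i, ∑ j, if G.Adj i j then (x i - x j) ^ 2 else 0) ≤ ∑ i, ∑ j, (x i - x j) ^ 2 :=
    sum_le_sum fun i _ => sum_le_sum fun j _ => by split_ifs; exacts [le_rfl, sq_nonneg _]
  have hall := sum_sum_sub_sq_le x
  simp only [dotProduct, ← sq]
  linarith

theorem lapEig_le_card [Fintype V] [DecidableEq V] (G : SimpleGraph V) (i : V) :
    lapEig G i ≤ Fintype.card V :=
  (G.posSemidef_lapMatrix ℝ).isHermitian.eigenvalues_le_of_forall_dotProduct_mulVec_le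
    G.dotProduct_lapMatrix_mulVec_le_card_mul i

def IsEdgeMatching (G : SimpleGraph V) (M : Finset (Sym2 V)) : Prop :=
  ↑M ⊆ G.edgeSet ∧ ∀ e ∈ M, ∀ f ∈ M, e ≠ f → ∀ v, ¬(v ∈ e ∧ v ∈ f)

namespace IsEdgeMatching

variable {G : SimpleGraph V} {M : Finset (Sym2 V)} (hM : G.IsEdgeMatching M)
include hM

theorem not_isDiag {e : Sym2 V} (he : e ∈ M) : ¬e.IsDiag :=
  G.not_isDiag_of_mem_edgeSet (hM.1 he)

theorem notMem_of_mem {e f : Sym2 V} (he : e ∈ M) (hf : f ∈ M) (hef : e ≠ f) {v : V}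
    (hv : v ∈ e) : v ∉ f :=
  fun hvf => hM.2 e he f hf hef v ⟨hv, hvf⟩

variable [DecidableEq V]

theorem sum_smul_orientedIndicator_apply (c : M → ℝ) (e : M) {v : V} (hv : v ∈ e.1) :
    (∑ f : M, c f • f.1.orientedIndicator) v = c e * e.1.orientedIndicator v := by
  rw [Finset.sum_apply, sum_eq_single e (fun f _ hfe => ?_) (by simp)]
  · rfl
  · rw [Pi.smul_apply, Sym2.orientedIndicator_apply_of_notMem
      (hM.notMem_of_mem e.2 f.2 (fun h => hfe (Subtype.ext h).symm) hv), smul_zero]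

theorem linearIndependent_orientedIndicator :
    LinearIndependent ℝ fun e : M => e.1.orientedIndicator := by
  refine Fintype.linearIndependent_iff.2 fun c hc e => ?_
  have := hM.sum_smul_orientedIndicator_apply c e (Sym2.out_fst_mem e.1)
  rwa [hc, Sym2.orientedIndicator_apply_out_fst (hM.not_isDiag e.2), mul_one, eq_comm] at this

variable [Fintype V] [DecidableRel G.Adj]

theorem sum_sq_sub_le_dotProduct_lapMatrix_mulVec (x : V → ℝ) :
    ∑ e ∈ M, (x e.out.1 - x e.out.2) ^ 2 ≤ x ⬝ᵥ G.lapMatrix ℝ *ᵥ x := by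
  set g : V → ℝ := fun i => ∑ j, if G.Adj i j then (x i - x j) ^ 2 else 0
  have hg_nonneg : ∀ i, 0 ≤ g i := fun i =>
    sum_nonneg fun j _ => by split_ifs; exacts [sq_nonneg _, le_rfl]
  have hterm : ∀ i j, G.Adj i j → (x i - x j) ^ 2 ≤ g i := fun i j hij => by
    have := single_le_sum (f := fun j => if G.Adj i j then (x i - x j) ^ 2 else 0)
      (fun j _ => by split_ifs; exacts [sq_nonneg _, le_rfl]) (mem_univ j)
    rwa [if_pos hij] at this
  have hpair : ∀ e ∈ M, 2 * (x e.out.1 - x e.out.2) ^ 2 ≤ ∑ v ∈ e.toFinset, g v := by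
    intro e he
    have hadj : G.Adj e.out.1 e.out.2 := by
      rw [← mem_edgeSet, Sym2.mk_out]; exact hM.1 he
    rw [Sym2.toFinset_eq_out, sum_pair hadj.ne]
    nlinarith [hterm _ _ hadj, hterm _ _ hadj.symm]
  have hdisj : (M : Set (Sym2 V)).PairwiseDisjoint Sym2.toFinset := by
    intro e he f hf hef
    exact Finset.disjoint_left.2 fun v hve hvf =>
      hM.notMem_of_mem he hf hef (Sym2.mem_toFinset.1 hve) (Sym2.mem_toFinset.1 hvf)
  have hcover : ∑ e ∈ M, ∑ v ∈ e.toFinset, g v ≤ ∑ v, g v := by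
    rw [← sum_biUnion hdisj]
    exact sum_le_univ_sum_of_nonneg hg_nonneg
  have hsum := sum_le_sum hpair
  rw [← mul_sum] at hsum
  rw [← toLinearMap₂'_apply', lapMatrix_toLinearMap₂']
  linarith

theorem two_mul_dotProduct_self_le_dotProduct_lapMatrix_mulVec {x : V → ℝ}
    (hx : x ∈ Submodule.span ℝ (Set.range fun e : M => e.1.orientedIndicator)) :
    2 * (x ⬝ᵥ x) ≤ x ⬝ᵥ G.lapMatrix ℝ *ᵥ x := by
  obtain ⟨c, hc⟩ := (Submodule.mem_span_range_iff_exists_fun ℝ).1 hx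
  have hfst : ∀ e : M, x e.1.out.1 = c e := fun e => by
    rw [← hc, hM.sum_smul_orientedIndicator_apply c e (Sym2.out_fst_mem _),
      Sym2.orientedIndicator_apply_out_fst (hM.not_isDiag e.2), mul_one]
  have hsnd : ∀ e : M, x e.1.out.2 = -c e := fun e => by
    rw [← hc, hM.sum_smul_orientedIndicator_apply c e (Sym2.out_snd_mem _),
      Sym2.orientedIndicator_apply_out_snd (hM.not_isDiag e.2), mul_neg_one]
  have hself : x ⬝ᵥ x = ∑ e : M, 2 * c e ^ 2 := by
    conv_lhs => arg 1; rw [← hc]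
    simp only [sum_dotProduct, smul_dotProduct, Sym2.orientedIndicator_dotProduct, hfst, hsnd,
      smul_eq_mul]
    exact sum_congr rfl fun e _ => by ring
  have hlap := hM.sum_sq_sub_le_dotProduct_lapMatrix_mulVec x
  rw [← sum_coe_sort M] at hlap
  simp only [hfst, hsnd] at hlap
  rw [hself, mul_sum]
  exact le_of_eq_of_le (sum_congr rfl fun e _ => by ring) hlap

end IsEdgeMatching

theorem IsEdgeMatching.card_le_card_lapEig_ge_two [Fintype V] [DecidableEq V]
    {G : SimpleGraph V} {M : Finset (Sym2 V)} (hM : G.IsEdgeMatching M) :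
    #M ≤ #{i | 2 ≤ lapEig G i} := by
  have h := (G.posSemidef_lapMatrix ℝ).isHermitian.finrank_le_card_eigenvalues_ge 2 _
    fun _ hx => hM.two_mul_dotProduct_self_le_dotProduct_lapMatrix_mulVec hx
  rwa [finrank_span_eq_card hM.linearIndependent_orientedIndicator, Fintype.card_coe] at h

end SimpleGraph

/-- For any graph $G$ on $n$ vertices, $\beta_1(G) \le m_G[2,n]$. -/
theorem matchNum_le_mCount_Icc_two_n {n : ℕ} (G : SimpleGraph (Fin n)) :
    matchNum G ≤ mCount G (fun x => 2 ≤ x ∧ x ≤ (n : ℝ)) := by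
  refine csSup_le ⟨0, ∅, by simp, by simp, rfl⟩ ?_
  rintro k ⟨M, hMG, hMdisj, rfl⟩
  have hM : G.IsEdgeMatching M := ⟨hMG, hMdisj⟩
  refine hM.card_le_card_lapEig_ge_two.trans (card_le_card fun i hi => ?_)
  simp only [mem_filter] at hi ⊢
  exact ⟨hi.1, hi.2, by simpa using G.lapEig_le_card i⟩
end

section
/- For any graph G on n vertices, m_G[0,1) · m_G(n−1,n] < n. In particular, at least one of the intervals [0,1) and (n−1,n] contains fewer than √n Laplacian eigenvalues of G. -/
open scoped Classical

/-!
Write `a = m_G[0,1)` and `b = m_G(n-1,n]`. The heart of the proof is that `a ≥ 2` and `b ≥ 2`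
exclude each other; together with `b < n` and `a + b ≤ n` this gives `a * b < n`.

If every two vertices of `G` have a common neighbour, then `a ≤ 1`: of two orthonormal
eigenvectors one is non-constant, and comparing the eigenvalue equation at a maximum and at a
minimum of it through a common neighbour forces its eigenvalue to be `≥ 1`.

Otherwise two vertices `p, q` have no common neighbour, so `{p, q}` dominates `Gᶜ`. An
eigenvector of `G` orthogonal to the constants is an eigenvector of `Gᶜ` for `n - λ`, so the
eigenvectors of `G` for eigenvalues in `(n-1,n]`, together with the constant vector, are `b + 1`
orthogonal eigenvectors of `Gᶜ` with eigenvalues `< 1`. If `b + 1` exceeded the size of a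
dominating set `S` of `Gᶜ`, a nonzero combination of them would vanish on `S`; its Rayleigh
quotient is `< 1`, while domination gives `xᵀ L x ≥ xᵀ x`. Hence `b + 1 ≤ |S|`: for `S = {p, q}`
this is `b ≤ 1`, and for `S = V` it is `b < n`.
-/

open Finset Matrix

section Orthogonal

variable {V ι : Type*} [Fintype V] [Fintype ι] {e : ι → V → ℝ}

theorem sum_smul_dotProduct_sum_smul (he : Pairwise fun i j => e i ⬝ᵥ e j = 0) (c d : ι → ℝ) :
    (∑ i, c i • e i) ⬝ᵥ (∑ j, d j • e j) = ∑ i, c i * d i * (e i ⬝ᵥ e i) := by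
  simp only [sum_dotProduct, dotProduct_sum, smul_dotProduct, dotProduct_smul, smul_eq_mul]
  refine sum_congr rfl fun i _ => ?_
  rw [sum_eq_single i (fun j _ hji => by simp [he hji]) (by simp)]
  ring

theorem dotProduct_mulVec_lt_of_pairwise_orthogonal (A : Matrix V V ℝ) {μ : ι → ℝ}
    (hA : ∀ i, A *ᵥ e i = μ i • e i) (he : Pairwise fun i j => e i ⬝ᵥ e j = 0)
    (he₀ : ∀ i, e i ≠ 0) (hμ : ∀ i, μ i < 1) {c : ι → ℝ} (hc : c ≠ 0) :
    (∑ i, c i • e i) ⬝ᵥ (A *ᵥ ∑ i, c i • e i) < (∑ i, c i • e i) ⬝ᵥ (∑ i, c i • e i) := by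
  have hAx : A *ᵥ ∑ i, c i • e i = ∑ i, (c i * μ i) • e i := by
    simp only [mulVec_sum, mulVec_smul, hA, smul_smul]
  rw [hAx, sum_smul_dotProduct_sum_smul he, sum_smul_dotProduct_sum_smul he]
  obtain ⟨i, hi⟩ := Function.ne_iff.mp hc
  have hpos (j : ι) : 0 < e j ⬝ᵥ e j :=
    (sum_nonneg fun _ _ => mul_self_nonneg _).lt_of_ne' (dotProduct_self_eq_zero.not.mpr (he₀ j))
  refine sum_lt_sum (fun j _ => ?_) ⟨i, mem_univ i, ?_⟩
  · linarith [mul_nonneg (mul_nonneg (mul_self_nonneg (c j)) (hpos j).le) (sub_pos.2 (hμ j)).le]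
  · linarith [mul_pos (mul_pos (mul_self_pos.2 hi) (hpos i)) (sub_pos.2 (hμ i))]

theorem exists_ne_zero_sum_smul_eq_zero_on (e : ι → V → ℝ) {S : Finset V}
    (hS : #S < Fintype.card ι) : ∃ c : ι → ℝ, c ≠ 0 ∧ ∀ s ∈ S, (∑ i, c i • e i) s = 0 := by
  let M : Matrix S ι ℝ := Matrix.of fun s i => e i s
  have hker : LinearMap.ker M.mulVecLin ≠ ⊥ := LinearMap.ker_ne_bot_of_finrank_lt <| by
    simpa only [Module.finrank_fintype_fun_eq_card, Fintype.card_coe] using hS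
  obtain ⟨c, hc, hc₀⟩ := (Submodule.ne_bot_iff _).mp hker
  refine ⟨c, hc₀, fun s hs => ?_⟩
  have := congrFun (LinearMap.mem_ker.mp hc) ⟨s, hs⟩
  simpa [M, mulVec, dotProduct, Finset.sum_apply, mul_comm] using this

theorem exists_ne_or_exists_ne_of_orthonormal {u v : V → ℝ} (hu : u ⬝ᵥ u = 1)
    (hv : v ⬝ᵥ v = 1) (huv : u ⬝ᵥ v = 0) : (∃ p q, u p ≠ u q) ∨ ∃ p q, v p ≠ v q := by
  by_contra! h
  obtain ⟨hu', hv'⟩ := h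
  obtain ⟨w, -⟩ := Function.ne_iff.mp (dotProduct_self_eq_zero.not.mp (hu ▸ one_ne_zero))
  simp only [dotProduct, hu' _ w, hv' _ w, sum_const, card_univ, nsmul_eq_mul] at hu hv huv
  have : (Fintype.card V * (u w * v w)) ^ 2 =
      (Fintype.card V * (u w * u w)) * (Fintype.card V * (v w * v w)) := by ring
  rw [hu, hv, huv] at this
  norm_num at this

end Orthogonal

section Count

variable {V : Type*} [Fintype V] [DecidableEq V] (G : SimpleGraph V)

theorem mCount_mono {P Q : ℝ → Prop} (h : ∀ x, P x → Q x) : mCount G P ≤ mCount G Q :=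
  card_le_card (monotone_filter_right _ fun i _ => h (lapEig G i))

theorem mCount_add_mCount_le {P Q : ℝ → Prop} (h : ∀ x, P x → Q x → False) :
    mCount G P + mCount G Q ≤ Fintype.card V := by
  rw [mCount, mCount, ← card_union_of_disjoint (disjoint_filter.mpr fun i _ => h _)]
  exact card_le_univ _

end Count

namespace SimpleGraph

variable {V : Type*} [Fintype V] [DecidableEq V] (G : SimpleGraph V)

section Laplacian

variable [DecidableRel G.Adj]

theorem lapMatrix_mulVec_apply_eq_sum (x : V → ℝ) (v : V) :
    (G.lapMatrix ℝ *ᵥ x) v = ∑ u ∈ G.neighborFinset v, (x v - x u) := by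
  rw [lapMatrix_mulVec_apply, sum_sub_distrib, sum_const, card_neighborFinset_eq_degree,
    nsmul_eq_mul]

theorem lapMatrix_mulVec_add_lapMatrix_compl_mulVec (x : V → ℝ) :
    G.lapMatrix ℝ *ᵥ x + Gᶜ.lapMatrix ℝ *ᵥ x = (Fintype.card V : ℝ) • x - fun _ => ∑ u, x u := by
  ext v
  have : ∑ u, (x v - x u) = Fintype.card V * x v - ∑ u, x u := by
    simp [sum_sub_distrib]
  rw [Pi.add_apply, lapMatrix_mulVec_apply_eq_sum, lapMatrix_mulVec_apply_eq_sum,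
    neighborFinset_compl, Pi.sub_apply, Pi.smul_apply, smul_eq_mul, ← this,
    ← sum_add_sum_compl (G.neighborFinset v),
    sum_eq_sum_sdiff_singleton_add (s := (G.neighborFinset v)ᶜ) (i := v) (by simp), sub_self,
    add_zero]

theorem sub_le_lapMatrix_mulVec_apply_of_forall_le {x : V → ℝ} {p c : V}
    (hp : ∀ v, x v ≤ x p) (hpc : G.Adj p c) : x p - x c ≤ (G.lapMatrix ℝ *ᵥ x) p := by
  rw [lapMatrix_mulVec_apply_eq_sum]
  exact single_le_sum (fun v _ => sub_nonneg.mpr (hp v)) ((G.mem_neighborFinset p c).mpr hpc)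

theorem one_le_of_lapMatrix_mulVec_eq_smul
    (hG : ∀ p q, p ≠ q → (G.commonNeighbors p q).Nonempty) {x : V → ℝ} {μ : ℝ}
    (hx : G.lapMatrix ℝ *ᵥ x = μ • x) (hnc : ∃ p q, x p ≠ x q) : 1 ≤ μ := by
  obtain ⟨a, b, hab⟩ := hnc
  have : Nonempty V := ⟨a⟩
  obtain ⟨p, hp⟩ := Finite.exists_max x
  obtain ⟨q, hq⟩ := Finite.exists_min x
  have hqp : x q < x p := by
    by_contra! h
    exact hab (by linarith [hp a, hq a, hp b, hq b])
  obtain ⟨c, hc⟩ := hG p q (fun h => by simp [h] at hqp)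
  rw [mem_commonNeighbors] at hc
  have hmax := G.sub_le_lapMatrix_mulVec_apply_of_forall_le hp hc.1
  have hmin := G.sub_le_lapMatrix_mulVec_apply_of_forall_le (x := -x)
    (fun v => neg_le_neg (hq v)) hc.2
  rw [hx] at hmax
  rw [mulVec_neg, hx] at hmin
  simp only [Pi.neg_apply, Pi.smul_apply, smul_eq_mul] at hmax hmin
  nlinarith

/-- Every vertex outside `S` contributes at least `x v ^ 2` to `xᵀ L x` through an edge into `S`,
where `x` vanishes. -/
theorem dotProduct_self_le_of_isDomSet {S : Finset V} (hS : IsDomSet G S) {x : V → ℝ}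
    (hx : ∀ s ∈ S, x s = 0) : x ⬝ᵥ x ≤ x ⬝ᵥ (G.lapMatrix ℝ *ᵥ x) := by
  set f : V → V → ℝ := fun i j => if G.Adj i j then (x i - x j) ^ 2 else 0
  have hf₀ (i j : V) : 0 ≤ f i j := by positivity
  have hfS (i : V) (hi : i ∉ S) : x i * x i ≤ ∑ j ∈ S, f i j := by
    obtain ⟨j, hj, hji⟩ := hS i hi
    calc x i * x i = f i j := by simp [f, hji.symm, hx j hj, sq]
      _ ≤ ∑ j ∈ S, f i j := single_le_sum (fun j _ => hf₀ i j) hj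
  have hsymm : ∑ i ∈ S, ∑ j ∈ Sᶜ, f i j = ∑ i ∈ Sᶜ, ∑ j ∈ S, f i j := by
    rw [sum_comm]
    refine sum_congr rfl fun i _ => sum_congr rfl fun j _ => ?_
    simp only [f, G.adj_comm, ← neg_sub (x i), neg_sq]
  have hxS : x ⬝ᵥ x = ∑ i ∈ Sᶜ, x i * x i := by
    rw [dotProduct, ← sum_add_sum_compl S, sum_eq_zero fun i hi => by simp [hx i hi], zero_add]
  rw [← toLinearMap₂'_apply', lapMatrix_toLinearMap₂', hxS, le_div_iff₀ two_pos]
  calc (∑ i ∈ Sᶜ, x i * x i) * 2 ≤ 2 * ∑ i ∈ Sᶜ, ∑ j ∈ S, f i j := by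
        rw [mul_comm]; gcongr with i hi; exact hfS i (mem_compl.mp hi)
    _ = ∑ i ∈ S, ∑ j ∈ Sᶜ, f i j + ∑ i ∈ Sᶜ, ∑ j ∈ S, f i j := by rw [hsymm, two_mul]
    _ ≤ ∑ i ∈ S, ∑ j, f i j + ∑ i ∈ Sᶜ, ∑ j, f i j :=
        add_le_add (sum_le_sum fun i _ => sum_le_univ_sum_of_nonneg (hf₀ i))
          (sum_le_sum fun i _ => sum_le_univ_sum_of_nonneg (hf₀ i))
    _ = ∑ i, ∑ j, f i j := sum_add_sum_compl S _

theorem card_le_card_of_isDomSet {ι : Type*} [Fintype ι] {S : Finset V} (hS : IsDomSet G S)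
    {e : ι → V → ℝ} {μ : ι → ℝ} (hGe : ∀ i, G.lapMatrix ℝ *ᵥ e i = μ i • e i)
    (he : Pairwise fun i j => e i ⬝ᵥ e j = 0) (he₀ : ∀ i, e i ≠ 0) (hμ : ∀ i, μ i < 1) :
    Fintype.card ι ≤ #S := by
  by_contra! h
  obtain ⟨c, hc, hcS⟩ := exists_ne_zero_sum_smul_eq_zero_on e h
  exact (dotProduct_mulVec_lt_of_pairwise_orthogonal _ hGe he he₀ hμ hc).not_ge
    (G.dotProduct_self_le_of_isDomSet hS hcS)

end Laplacian

omit [Fintype V] in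
theorem isDomSet_compl_pair {p q : V} (h : G.commonNeighbors p q = ∅) : IsDomSet Gᶜ {p, q} := by
  intro v hv
  simp only [mem_insert, mem_singleton, not_or] at hv
  by_cases hpv : G.Adj p v
  · refine ⟨q, by simp, (G.compl_adj q v).mpr ⟨Ne.symm hv.2, fun hqv => ?_⟩⟩
    exact (Set.eq_empty_iff_forall_notMem.mp h v) ((G.mem_commonNeighbors).mpr ⟨hpv, hqv⟩)
  · exact ⟨p, by simp, (G.compl_adj p v).mpr ⟨Ne.symm hv.1, hpv⟩⟩

noncomputable def lapEigvec (i : V) : V → ℝ :=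
  (G.posSemidef_lapMatrix ℝ).isHermitian.eigenvectorBasis i

theorem lapMatrix_mulVec_lapEigvec (i : V) :
    G.lapMatrix ℝ *ᵥ G.lapEigvec i = lapEig G i • G.lapEigvec i :=
  (G.posSemidef_lapMatrix ℝ).isHermitian.mulVec_eigenvectorBasis i

theorem lapEigvec_dotProduct_lapEigvec (i j : V) :
    G.lapEigvec i ⬝ᵥ G.lapEigvec j = if i = j then 1 else 0 := by
  rw [← orthonormal_iff_ite.mp (G.posSemidef_lapMatrix ℝ).isHermitian.eigenvectorBasis.orthonormal,
    EuclideanSpace.inner_eq_star_dotProduct, dotProduct_comm]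
  rfl

theorem lapEigvec_dotProduct_const (i : V) (hi : lapEig G i ≠ 0) :
    G.lapEigvec i ⬝ᵥ (fun _ => 1) = 0 := by
  have h := dotProduct_mulVec (G.lapEigvec i) (G.lapMatrix ℝ) fun _ => 1
  rw [lapMatrix_mulVec_const_eq_zero, dotProduct_zero, ← mulVec_transpose,
    (G.isSymm_lapMatrix (R := ℝ)).eq, lapMatrix_mulVec_lapEigvec, smul_dotProduct,
    smul_eq_mul] at h
  exact (mul_eq_zero.mp h.symm).resolve_left hi

theorem mCount_lt_one_le_one (hG : ∀ p q, p ≠ q → (G.commonNeighbors p q).Nonempty) :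
    mCount G (· < 1) ≤ 1 := by
  refine card_le_one.mpr fun i hi j hj => ?_
  by_contra hij
  rw [mem_filter] at hi hj
  have hdot := G.lapEigvec_dotProduct_lapEigvec
  rcases exists_ne_or_exists_ne_of_orthonormal (by simpa using hdot i i) (by simpa using hdot j j)
    (by simpa [hij] using hdot i j) with hnc | hnc
  · exact (G.one_le_of_lapMatrix_mulVec_eq_smul hG (G.lapMatrix_mulVec_lapEigvec i) hnc).not_gt hi.2
  · exact (G.one_le_of_lapMatrix_mulVec_eq_smul hG (G.lapMatrix_mulVec_lapEigvec j) hnc).not_gt hj.2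

theorem mCount_gt_add_one_le_of_isDomSet_compl [Nonempty V] {S : Finset V}
    (hS : IsDomSet Gᶜ S) : mCount G (fun x => (Fintype.card V : ℝ) - 1 < x) + 1 ≤ #S := by
  set T := {k // (Fintype.card V : ℝ) - 1 < lapEig G k}
  have hT (k : T) : G.lapEigvec k ⬝ᵥ (fun _ => 1) = 0 := by
    have hk : (1 : ℝ) ≤ Fintype.card V := Nat.one_le_cast.mpr Fintype.card_pos
    exact G.lapEigvec_dotProduct_const k (by linarith [k.2])
  let e : Option T → V → ℝ := fun o => o.elim (fun _ => 1) fun k => G.lapEigvec k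
  let μ : Option T → ℝ := fun o => o.elim 0 fun k => Fintype.card V - lapEig G k
  have hcard : Fintype.card (Option T) =
      mCount G (fun x => (Fintype.card V : ℝ) - 1 < x) + 1 := by
    rw [Fintype.card_option, Fintype.card_subtype]; rfl
  rw [← hcard]
  refine Gᶜ.card_le_card_of_isDomSet hS (e := e) (μ := μ) ?_ ?_ ?_ ?_
  · rintro (_ | k)
    · simp [e, μ, lapMatrix_mulVec_const_eq_zero]
    · have h := G.lapMatrix_mulVec_add_lapMatrix_compl_mulVec (G.lapEigvec k)
      rw [show ∑ v, G.lapEigvec k v = 0 by simpa [dotProduct] using hT k,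
        G.lapMatrix_mulVec_lapEigvec, ← Pi.zero_def, sub_zero] at h
      show Gᶜ.lapMatrix ℝ *ᵥ G.lapEigvec k = ((Fintype.card V : ℝ) - lapEig G k) • G.lapEigvec k
      rw [sub_smul, ← h, add_sub_cancel_left]
  · rintro (_ | k) (_ | l) hkl
    · exact absurd rfl hkl
    · simpa [e, dotProduct_comm] using hT l
    · simpa [e] using hT k
    · simpa [e, G.lapEigvec_dotProduct_lapEigvec, Subtype.coe_inj] using hkl
  · rintro (_ | k)
    · exact one_ne_zero
    · intro h
      have hkk := G.lapEigvec_dotProduct_lapEigvec k k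
      simp only [e, Option.elim] at h
      simp [h] at hkk
  · rintro (_ | k)
    · exact zero_lt_one
    · simp only [μ, Option.elim]
      linarith [k.2]

end SimpleGraph

theorem lt_sqrt_or_lt_sqrt_of_mul_lt {a b c : ℝ} (h : a * b < c) : a < √c ∨ b < √c := by
  by_contra! hab
  rcases le_or_gt 0 c with hc | hc
  · nlinarith [Real.mul_self_sqrt hc, Real.sqrt_nonneg c, mul_le_mul hab.1 hab.2
      (Real.sqrt_nonneg c) ((Real.sqrt_nonneg c).trans hab.1)]
  · nlinarith [Real.sqrt_nonneg c, mul_nonneg ((Real.sqrt_nonneg c).trans hab.1)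
      ((Real.sqrt_nonneg c).trans hab.2)]

/-- $m_G[0,1) \cdot m_G(n-1,n] < n$; in particular at least one of the intervals
$[0,1)$ and $(n-1,n]$ contains fewer than $\sqrt n$ Laplacian eigenvalues. -/
theorem mCount_mul_mCount_lt {n : ℕ} (hn : 0 < n) (G : SimpleGraph (Fin n)) :
    mCount G (fun x => 0 ≤ x ∧ x < 1) *
      mCount G (fun x => (n : ℝ) - 1 < x ∧ x ≤ (n : ℝ)) < n ∧
    ((mCount G (fun x => 0 ≤ x ∧ x < 1) : ℝ) < Real.sqrt n ∨
      (mCount G (fun x => (n : ℝ) - 1 < x ∧ x ≤ (n : ℝ)) : ℝ) < Real.sqrt n) := by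
  have : Nonempty (Fin n) := ⟨⟨0, hn⟩⟩
  set a := mCount G (fun x => 0 ≤ x ∧ x < 1)
  set b := mCount G (fun x => (n : ℝ) - 1 < x ∧ x ≤ (n : ℝ))
  have hb (S : Finset (Fin n)) (hS : IsDomSet Gᶜ S) : b + 1 ≤ #S :=
    (Nat.add_le_add_right (mCount_mono G fun x hx => by simpa using hx.1) 1).trans
      (G.mCount_gt_add_one_le_of_isDomSet_compl hS)
  have hbn : b < n := by simpa using hb univ fun v hv => absurd (mem_univ v) hv
  have hab : a ≤ 1 ∨ b ≤ 1 := by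
    by_cases hG : ∀ p q, p ≠ q → (G.commonNeighbors p q).Nonempty
    · exact .inl ((mCount_mono G fun x hx => hx.2).trans (G.mCount_lt_one_le_one hG))
    · push Not at hG
      obtain ⟨p, q, -, hpq⟩ := hG
      have := (hb _ (G.isDomSet_compl_pair hpq)).trans card_le_two
      exact .inr (by omega)
  have hsum (hb₁ : 1 ≤ b) : a + b ≤ n := by
    have : (2 : ℝ) ≤ n := by exact_mod_cast (by omega : 2 ≤ n)
    simpa using mCount_add_mCount_le G fun x hx hx' => by linarith [hx.2, hx'.1]
  have hmul : a * b < n := by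
    rcases hab with ha | hb₁
    · nlinarith
    · interval_cases b <;> omega
  exact ⟨hmul, lt_sqrt_or_lt_sqrt_of_mul_lt (by exact_mod_cast hmul)⟩
end

section
/- For any graph G on n vertices, m_G[1,n] ≥ Δ(G), the maximum vertex degree of G. -/
open scoped Classical

/-!
Fix a vertex `v` of maximum degree `Δ`. A vector `x` supported on the neighbourhood of `v`
satisfies `xᵀ L x ≥ ‖x‖²`: already the edges at `v` contribute `∑ (x v - x u)² = ‖x‖²`, since
`x v = 0`. Such vectors form a `Δ`-dimensional space, and a nonzero vector orthogonal to all
eigenvectors with eigenvalue `≥ 1` has `xᵀ L x < ‖x‖²`; so projecting onto those eigenvectors is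
injective on this space, and `L` has at least `Δ` eigenvalues `≥ 1`. They all lie in `[1, n]`
because `xᵀ L x ≤ ½ ∑ᵢ ∑ⱼ (xᵢ - xⱼ)² ≤ n ‖x‖²`.
-/

open Finset Matrix Module RCLike
open scoped InnerProductSpace

namespace LinearMap.IsSymmetric

variable {𝕜 E : Type*} [RCLike 𝕜] [NormedAddCommGroup E] [InnerProductSpace 𝕜 E]
  [FiniteDimensional 𝕜 E] {T : E →ₗ[𝕜] E} (hT : T.IsSymmetric) {n : ℕ} (hn : finrank 𝕜 E = n)

theorem re_inner_apply_self_eq_sum (x : E) :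
    re ⟪x, T x⟫_𝕜 = ∑ i, hT.eigenvalues hn i * ‖⟪hT.eigenvectorBasis hn i, x⟫_𝕜‖ ^ 2 := by
  rw [← (hT.eigenvectorBasis hn).sum_inner_mul_inner, map_sum]
  refine sum_congr rfl fun i _ => ?_
  rw [← hT, apply_eigenvectorBasis, inner_smul_left, conj_ofReal, mul_left_comm,
    ← inner_conj_symm, RCLike.conj_mul]
  norm_cast

theorem re_inner_apply_self_lt {c : ℝ} {x : E} (hx : x ≠ 0)
    (hxc : ∀ i, c ≤ hT.eigenvalues hn i → ⟪hT.eigenvectorBasis hn i, x⟫_𝕜 = 0) :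
    re ⟪x, T x⟫_𝕜 < c * ‖x‖ ^ 2 := by
  set b := hT.eigenvectorBasis hn
  obtain ⟨j, hj⟩ : ∃ j, ⟪b j, x⟫_𝕜 ≠ 0 := by
    by_contra! h
    exact hx (by simpa [h] using (b.sum_repr' x).symm)
  rw [re_inner_apply_self_eq_sum hT hn, ← b.sum_sq_norm_inner_right, mul_sum]
  refine sum_lt_sum (fun i _ => ?_) ⟨j, mem_univ j, ?_⟩
  · by_cases hi : c ≤ hT.eigenvalues hn i
    · simp [b, hxc i hi]
    · gcongr
      exact (not_le.1 hi).le
  · have hjc : hT.eigenvalues hn j < c := by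
      by_contra! h; exact hj (hxc j h)
    gcongr

theorem eigenvalues_le {c : ℝ} (h : ∀ x, re ⟪x, T x⟫_𝕜 ≤ c * ‖x‖ ^ 2) (i : Fin n) :
    hT.eigenvalues hn i ≤ c := by
  simpa [inner_smul_right, (hT.eigenvectorBasis hn).orthonormal.1 i] using
    h (hT.eigenvectorBasis hn i)

theorem finrank_le_card_le_eigenvalues {c : ℝ} {W : Submodule 𝕜 E}
    (hW : ∀ x ∈ W, c * ‖x‖ ^ 2 ≤ re ⟪x, T x⟫_𝕜) :
    finrank 𝕜 W ≤ #{i | c ≤ hT.eigenvalues hn i} := by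
  let coeffs : W →ₗ[𝕜] {i // c ≤ hT.eigenvalues hn i} → 𝕜 :=
    LinearMap.pi fun i => (innerₛₗ 𝕜 (hT.eigenvectorBasis hn i)).comp W.subtype
  have hinj : Function.Injective coeffs := by
    rw [← LinearMap.ker_eq_bot, Submodule.eq_bot_iff]
    intro x hx
    by_contra hx0
    have h0 : (x : E) ≠ 0 := by simpa using hx0
    refine (hW x x.2).not_gt (hT.re_inner_apply_self_lt hn h0 fun i hi => ?_)
    simpa [coeffs] using congr_fun hx ⟨i, hi⟩
  simpa [Fintype.card_subtype] using LinearMap.finrank_le_finrank_of_injective hinj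

end LinearMap.IsSymmetric

namespace Matrix

variable {𝕜 ι : Type*} [RCLike 𝕜] [Fintype ι] [DecidableEq ι]

theorem inner_toEuclideanLin_self (A : Matrix ι ι 𝕜) (x : EuclideanSpace 𝕜 ι) :
    ⟪x, toEuclideanLin A x⟫_𝕜 = star (WithLp.ofLp x) ⬝ᵥ A *ᵥ WithLp.ofLp x := by
  rw [EuclideanSpace.inner_eq_star_dotProduct, dotProduct_comm]
  rfl

namespace IsHermitian

variable {A : Matrix ι ι 𝕜} (hA : A.IsHermitian)

theorem eigenvalues_le {c : ℝ} (h : ∀ x : ι → 𝕜, re (star x ⬝ᵥ A *ᵥ x) ≤ c * ∑ i, ‖x i‖ ^ 2)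
    (i : ι) : hA.eigenvalues i ≤ c :=
  (isSymmetric_toEuclideanLin_iff.mpr hA).eigenvalues_le _ (fun x => by
    simpa [inner_toEuclideanLin_self, EuclideanSpace.norm_sq_eq] using h (WithLp.ofLp x)) _

theorem finrank_le_card_le_eigenvalues {c : ℝ} {W : Submodule 𝕜 (ι → 𝕜)}
    (hW : ∀ x ∈ W, c * ∑ i, ‖x i‖ ^ 2 ≤ re (star x ⬝ᵥ A *ᵥ x)) :
    finrank 𝕜 W ≤ #{i | c ≤ hA.eigenvalues i} := by
  let e := (WithLp.linearEquiv 2 𝕜 (ι → 𝕜)).symm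
  have h := (isSymmetric_toEuclideanLin_iff.mpr hA).finrank_le_card_le_eigenvalues
    finrank_euclideanSpace (c := c) (W := W.map (e : (ι → 𝕜) →ₗ[𝕜] EuclideanSpace 𝕜 ι))
    fun x hx => by
      simpa [e, inner_toEuclideanLin_self, EuclideanSpace.norm_sq_eq] using
        hW _ ((Submodule.mem_map_equiv _).1 hx)
  rw [LinearEquiv.finrank_map_eq] at h
  refine h.trans_eq (card_equiv (Fintype.equivOfCardEq (Fintype.card_fin _)) fun j => ?_)
  rw [mem_filter, mem_filter]
  simp [eigenvalues, eigenvalues₀]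

end IsHermitian

end Matrix

namespace SimpleGraph

variable {V : Type*} [Fintype V] [DecidableEq V] (G : SimpleGraph V) [DecidableRel G.Adj]

theorem dotProduct_lapMatrix_mulVec_le (x : V → ℝ) :
    x ⬝ᵥ (G.lapMatrix ℝ *ᵥ x) ≤ Fintype.card V * ∑ i, x i ^ 2 := by
  rw [← toLinearMap₂'_apply', lapMatrix_toLinearMap₂']
  have hadj : (∑ i, ∑ j, if G.Adj i j then (x i - x j) ^ 2 else 0) ≤ ∑ i, ∑ j, (x i - x j) ^ 2 :=
    sum_le_sum fun i _ => sum_le_sum fun j _ => by split_ifs; exacts [le_rfl, sq_nonneg _]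
  have hall : ∑ i, ∑ j, (x i - x j) ^ 2 = 2 * (Fintype.card V * ∑ i, x i ^ 2 - (∑ i, x i) ^ 2) := by
    have h (a b : ℝ) : (a - b) ^ 2 = a ^ 2 - 2 * (a * b) + b ^ 2 := by ring
    simp only [h, sum_add_distrib, sum_sub_distrib, sum_const, card_univ, nsmul_eq_mul,
      ← mul_sum, ← sum_mul]
    ring_nf
  nlinarith [sq_nonneg (∑ i, x i)]

theorem sum_sq_le_dotProduct_lapMatrix_mulVec {v : V} {x : V → ℝ}
    (hx : ∀ w ∉ G.neighborSet v, x w = 0) :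
    ∑ i, x i ^ 2 ≤ x ⬝ᵥ (G.lapMatrix ℝ *ᵥ x) := by
  rw [← toLinearMap₂'_apply', lapMatrix_toLinearMap₂']
  set f : V → V → ℝ := fun a b => if G.Adj a b then (x a - x b) ^ 2 else 0
  have hxv : x v = 0 := hx v G.notMem_neighborSet_self
  have hrow : ∀ b, f v b = x b ^ 2 := fun b => by
    by_cases h : G.Adj v b
    · simp [f, h, hxv]
    · simp [f, h, hx b h]
  have hcol : ∀ a, f a v = x a ^ 2 := fun a => by
    rw [← hrow a]
    simp only [f, G.adj_comm a v, sub_sq_comm (x a)]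
  have hrow_col : ∑ b, f v b + ∑ a, f a v ≤ ∑ a, ∑ b, f a b := by
    rw [← add_sum_erase univ (fun a => ∑ b, f a b) (mem_univ v),
      ← add_sum_erase univ (fun a => f a v) (mem_univ v), hcol v, hxv, zero_pow two_ne_zero,
      zero_add]
    gcongr with a
    refine single_le_sum (fun b _ => ?_) (mem_univ v)
    simp only [f]
    split_ifs
    exacts [sq_nonneg _, le_rfl]
  simp only [hrow, hcol] at hrow_col
  linarith

end SimpleGraph

section lapEig

-- `lapEig` is built from the classical `DecidableRel G.Adj`, so no such instance is bound here.
variable {V : Type*} [Fintype V] [DecidableEq V] (G : SimpleGraph V)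

theorem lapEig_le_card (i : V) : lapEig G i ≤ Fintype.card V :=
  (G.posSemidef_lapMatrix ℝ).isHermitian.eigenvalues_le (fun x => by
    simpa [Real.norm_eq_abs] using G.dotProduct_lapMatrix_mulVec_le x) i

theorem degree_le_card_one_le_lapEig (v : V) : G.degree v ≤ #{i | 1 ≤ lapEig G i} := by
  have h := (G.posSemidef_lapMatrix ℝ).isHermitian.finrank_le_card_le_eigenvalues (c := 1)
    (W := Pi.spanSubset ℝ (G.neighborSet v)) fun x hx => by
      simpa [Real.norm_eq_abs] using
        G.sum_sq_le_dotProduct_lapMatrix_mulVec (Pi.mem_spanSubset_iff.1 hx)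
  rwa [Pi.dim_spanSubset, Set.ncard_eq_toFinset_card', Set.toFinset_card,
    G.card_neighborSet_eq_degree] at h

end lapEig

/-- For any graph $G$, $m_G[1,n] \ge \Delta(G)$. -/
theorem maxDegree_le_mCount_Icc_one_n {n : ℕ} (G : SimpleGraph (Fin n)) :
    G.maxDegree ≤ mCount G (fun x => 1 ≤ x ∧ x ≤ (n : ℝ)) := by
  have hcount : mCount G (fun x => 1 ≤ x ∧ x ≤ (n : ℝ)) = #{i | 1 ≤ lapEig G i} := by
    unfold mCount
    congr 1 with i
    have hle : lapEig G i ≤ n := by simpa using lapEig_le_card G i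
    simp [hle]
  rw [hcount]
  exact G.maxDegree_le_of_forall_degree_le _ (degree_le_card_one_le_lapEig G)
end

section
/- For any graphs G and H, m_{G□H}[0,1) ≤ m_G[0,1) · m_H[0,1), where G□H is the Cartesian product. Consequently, for every k ≥ 1, m_{G^k}[0,1) ≤ (m_G[0,1))^k. -/
/-! The Laplacian of `G □ H` is the Kronecker sum `L_G ⊗ 1 + 1 ⊗ L_H`. Conjugating by the
Kronecker product of orthonormal eigenbases of `L_G` and `L_H` diagonalises it, so its
eigenvalues, with multiplicity, are the sums `λᵢ + μⱼ`. Laplacian eigenvalues are nonnegative,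
so `λᵢ + μⱼ ∈ [0,1)` forces `λᵢ, μⱼ ∈ [0,1)`, which injects the eigenvalues of `G □ H` in
`[0,1)` into pairs of such eigenvalues of `G` and `H`. For powers, `G^(k+1) ≃ G □ G^k`,
isomorphic graphs have the same Laplacian spectrum, and `G^0` has a single vertex. -/

open scoped Classical

/-- The $k$-fold Cartesian power of a graph $G$. -/
def cartPow {V : Type*} (G : SimpleGraph V) (k : ℕ) : SimpleGraph (Fin k → V) where
  Adj f g := ∃ i, G.Adj (f i) (g i) ∧ ∀ j, j ≠ i → f j = g j
  symm := by
    constructor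
    rintro f g ⟨i, hadj, hfix⟩
    exact ⟨i, hadj.symm, fun j hj => (hfix j hj).symm⟩
  loopless := by
    constructor
    rintro f ⟨i, hadj, -⟩
    exact G.loopless.irrefl _ hadj

open Finset Matrix Polynomial
open scoped Kronecker

theorem Polynomial.map_univ_eq_of_prod_X_sub_C_eq {R ι κ : Type*} [CommRing R] [IsDomain R]
    [Fintype ι] [Fintype κ] {f : ι → R} {g : κ → R}
    (h : ∏ i, (X - C (f i)) = ∏ j, (X - C (g j))) : univ.val.map f = univ.val.map g := by
  simpa [roots_prod, prod_ne_zero_iff, X_sub_C_ne_zero] using congrArg roots h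

theorem Finset.card_filter_univ_eq_countP_map {ι α : Type*} [Fintype ι] (g : ι → α)
    (P : α → Prop) : #{i | P (g i)} = (univ.val.map g).countP P := by
  rw [Multiset.countP_map]
  rfl

namespace Matrix.IsHermitian

variable {𝕜 m n : Type*} [RCLike 𝕜] [Fintype m] [DecidableEq m] [Fintype n] [DecidableEq n]
  {A : Matrix m m 𝕜} {B : Matrix n n 𝕜}

theorem charpoly_kronecker_one_add_one_kronecker (hA : A.IsHermitian) (hB : B.IsHermitian) :
    (A ⊗ₖ (1 : Matrix n n 𝕜) + (1 : Matrix m m 𝕜) ⊗ₖ B).charpoly =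
      ∏ p : m × n, (X - C ((hA.eigenvalues p.1 + hB.eigenvalues p.2 : ℝ) : 𝕜)) := by
  set U : Matrix m m 𝕜 := hA.eigenvectorUnitary.1
  set V : Matrix n n 𝕜 := hB.eigenvectorUnitary.1
  have hU : U * star U = 1 := Unitary.mul_star_self_of_mem hA.eigenvectorUnitary.2
  have hV : V * star V = 1 := Unitary.mul_star_self_of_mem hB.eigenvectorUnitary.2
  have hUV : U ⊗ₖ V ∈ unitary _ :=
    kronecker_mem_unitary hA.eigenvectorUnitary.2 hB.eigenvectorUnitary.2
  have hA' : A = U * diagonal (RCLike.ofReal ∘ hA.eigenvalues) * star U := by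
    simpa using hA.spectral_theorem
  have hB' : B = V * diagonal (RCLike.ofReal ∘ hB.eigenvalues) * star V := by
    simpa using hB.spectral_theorem
  have hdiag : diagonal (fun p : m × n => ((hA.eigenvalues p.1 + hB.eigenvalues p.2 : ℝ) : 𝕜)) =
      diagonal (RCLike.ofReal ∘ hA.eigenvalues) ⊗ₖ (1 : Matrix n n 𝕜) +
        (1 : Matrix m m 𝕜) ⊗ₖ diagonal (RCLike.ofReal ∘ hB.eigenvalues) := by
    rw [← diagonal_one, ← diagonal_one, diagonal_kronecker_diagonal, diagonal_kronecker_diagonal,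
      diagonal_add]
    simp
  have hsum : A ⊗ₖ (1 : Matrix n n 𝕜) + (1 : Matrix m m 𝕜) ⊗ₖ B = (U ⊗ₖ V) *
      diagonal (fun p : m × n => ((hA.eigenvalues p.1 + hB.eigenvalues p.2 : ℝ) : 𝕜)) *
        star (U ⊗ₖ V) := by
    rw [hdiag, star_eq_conjTranspose, conjTranspose_kronecker, ← star_eq_conjTranspose,
      ← star_eq_conjTranspose, mul_add, add_mul, ← mul_kronecker_mul, ← mul_kronecker_mul,
      ← mul_kronecker_mul, ← mul_kronecker_mul, mul_one, mul_one, hU, hV, ← hA', ← hB']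
  rw [hsum, charpoly_mul_comm, ← mul_assoc, Unitary.star_mul_self_of_mem hUV, one_mul,
    charpoly_diagonal]

end Matrix.IsHermitian

namespace SimpleGraph

variable {R V W : Type*} [Ring R] [Fintype V] [DecidableEq V] [Fintype W] [DecidableEq W]

theorem lapMatrix_boxProd (G : SimpleGraph V) (H : SimpleGraph W) :
    (G □ H).lapMatrix R =
      G.lapMatrix R ⊗ₖ (1 : Matrix W W R) + (1 : Matrix V V R) ⊗ₖ H.lapMatrix R := by
  ext ⟨a, b⟩ ⟨c, d⟩
  by_cases hac : a = c <;> by_cases hbd : b = d <;>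
    simp [lapMatrix, degMatrix, one_apply, degree_boxProd, hac, hbd]

theorem Iso.reindex_lapMatrix {G : SimpleGraph V} {H : SimpleGraph W} (f : G ≃g H) :
    (G.lapMatrix R).reindex f f = H.lapMatrix R := by
  ext x y
  have hdeg : H.degree x = G.degree (f.symm x) := by rw [← f.degree_eq, f.apply_symm_apply]
  simp only [lapMatrix, degMatrix, ← f.reindex_adjMatrix R, reindex_apply, submatrix_apply,
    Matrix.sub_apply, diagonal_apply, EmbeddingLike.apply_eq_iff_eq, hdeg]
  rfl

end SimpleGraph

section LaplacianSpectrum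

variable {V W : Type*} [Fintype V] [DecidableEq V] [Fintype W]

theorem lapEig_nonneg (G : SimpleGraph V) (i : V) : 0 ≤ lapEig G i :=
  (G.posSemidef_lapMatrix ℝ).eigenvalues_nonneg i

theorem charpoly_lapMatrix_eq_prod_lapEig (G : SimpleGraph V) :
    (G.lapMatrix ℝ).charpoly = ∏ i, (X - C (lapEig G i)) := by
  simpa [lapEig] using (G.posSemidef_lapMatrix ℝ).isHermitian.charpoly_eq

theorem mCount_eq_card_filter_of_charpoly_eq (G : SimpleGraph V) {f : W → ℝ}
    (hf : (G.lapMatrix ℝ).charpoly = ∏ w, (X - C (f w))) (P : ℝ → Prop) :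
    mCount G P = #{w | P (f w)} := by
  have hspec :=
    map_univ_eq_of_prod_X_sub_C_eq ((charpoly_lapMatrix_eq_prod_lapEig G).symm.trans hf)
  rw [mCount, card_filter_univ_eq_countP_map, hspec, card_filter_univ_eq_countP_map]

variable [DecidableEq W]

theorem mCount_congr {G : SimpleGraph V} {H : SimpleGraph W} (f : G ≃g H) (P : ℝ → Prop) :
    mCount G P = mCount H P :=
  (mCount_eq_card_filter_of_charpoly_eq H (by
    rw [← f.reindex_lapMatrix, charpoly_reindex, charpoly_lapMatrix_eq_prod_lapEig]) P).symm

theorem mCount_boxProd (G : SimpleGraph V) (H : SimpleGraph W) (P : ℝ → Prop) :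
    mCount (G.boxProd H) P = #{p : V × W | P (lapEig G p.1 + lapEig H p.2)} :=
  mCount_eq_card_filter_of_charpoly_eq _ (by
    rw [SimpleGraph.lapMatrix_boxProd]
    simpa [lapEig] using
      (G.posSemidef_lapMatrix ℝ).isHermitian.charpoly_kronecker_one_add_one_kronecker
        (H.posSemidef_lapMatrix ℝ).isHermitian) P

theorem mCount_boxProd_le (G : SimpleGraph V) (H : SimpleGraph W) {P : ℝ → Prop}
    (hP : ∀ x y, 0 ≤ x → 0 ≤ y → P (x + y) → P x ∧ P y) :
    mCount (G.boxProd H) P ≤ mCount G P * mCount H P := by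
  rw [mCount_boxProd, mCount, mCount, ← card_product]
  refine card_le_card fun p hp => ?_
  simp only [mem_filter, mem_product, mem_univ, true_and] at hp ⊢
  exact hP _ _ (lapEig_nonneg G p.1) (lapEig_nonneg H p.2) hp

end LaplacianSpectrum

theorem cartPow_adj_cons {V : Type*} (G : SimpleGraph V) {k : ℕ} {a b : V} {f g : Fin k → V} :
    (cartPow G (k + 1)).Adj (Fin.cons a f) (Fin.cons b g) ↔
      G.Adj a b ∧ f = g ∨ (cartPow G k).Adj f g ∧ a = b := by
  simp [cartPow, Fin.exists_fin_succ, Fin.forall_fin_succ, funext_iff, Fin.succ_ne_zero,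
    (Fin.succ_ne_zero _).symm, and_left_comm, exists_and_left]
  exact or_congr_right and_comm

def cartPowSuccIso {V : Type*} (G : SimpleGraph V) (k : ℕ) :
    G.boxProd (cartPow G k) ≃g cartPow G (k + 1) where
  toEquiv := Fin.consEquiv fun _ => V
  map_rel_iff' := by
    rintro ⟨a, f⟩ ⟨b, g⟩
    simp [Fin.consEquiv, cartPow_adj_cons, SimpleGraph.boxProd_adj]

theorem mCount_cartPow_le {V : Type*} [Fintype V] [DecidableEq V] (G : SimpleGraph V)
    {P : ℝ → Prop} (hP : ∀ x y, 0 ≤ x → 0 ≤ y → P (x + y) → P x ∧ P y) (k : ℕ) :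
    mCount (cartPow G k) P ≤ mCount G P ^ k := by
  induction k with
  | zero =>
    calc mCount (cartPow G 0) P ≤ Fintype.card (Fin 0 → V) := card_le_univ _
      _ = mCount G P ^ 0 := by simp
  | succ k ih =>
    calc mCount (cartPow G (k + 1)) P
        = mCount (G.boxProd (cartPow G k)) P := (mCount_congr (cartPowSuccIso G k) P).symm
      _ ≤ mCount G P * mCount (cartPow G k) P := mCount_boxProd_le G _ hP
      _ ≤ mCount G P * mCount G P ^ k := Nat.mul_le_mul_left _ ih
      _ = mCount G P ^ (k + 1) := (pow_succ' _ _).symm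

/-- $m_{G \square H}[0,1) \le m_G[0,1) \cdot m_H[0,1)$, and consequently
$m_{G^k}[0,1) \le m_G[0,1)^k$ for all $k \ge 1$. -/
theorem mCount_boxProd_and_cartPow :
    (∀ {α β : Type} [Fintype α] [DecidableEq α] [Fintype β] [DecidableEq β]
      (G : SimpleGraph α) (H : SimpleGraph β),
      mCount (G.boxProd H) (fun x => 0 ≤ x ∧ x < 1) ≤
        mCount G (fun x => 0 ≤ x ∧ x < 1) * mCount H (fun x => 0 ≤ x ∧ x < 1)) ∧
    (∀ {α : Type} [Fintype α] [DecidableEq α] (G : SimpleGraph α) (k : ℕ), 1 ≤ k →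
      mCount (cartPow G k) (fun x => 0 ≤ x ∧ x < 1) ≤
        (mCount G (fun x => 0 ≤ x ∧ x < 1)) ^ k) := by
  have hIco : ∀ x y : ℝ, 0 ≤ x → 0 ≤ y → (0 ≤ x + y ∧ x + y < 1) →
      (0 ≤ x ∧ x < 1) ∧ (0 ≤ y ∧ y < 1) :=
    fun x y hx hy h => ⟨⟨hx, by linarith [h.2]⟩, ⟨hy, by linarith [h.2]⟩⟩
  exact ⟨fun G H => mCount_boxProd_le G H hIco, fun G k _ => mCount_cartPow_le G hIco k⟩
end
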